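/- There are no integers a, b, c with a + b + c = 1 such that, setting t = b + c, the three rational numbers (1/203)(28t), (1/203)(−168t), (1/203)(t + 377) are all non-negative integers. -/

import Mathlib

theorem Int.eq_mul_of_cast_div_eq_natCast {z : ℤ} {d n : ℕ} (hd : d ≠ 0)
    (h : (z : ℚ) / d = n) : z = d * n := by
  rw [div_eq_iff (Nat.cast_ne_zero.mpr hd)] at h
  exact_mod_cast h.trans (mul_comm _ _)

/-- Luthar–Passi constraints excluding units of order 203 in `V(ℤRu)`: there are no
integers `a, b, c` with `a + b + c = 1` such that, with `t = b + c`, the rationals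
`(1/203)(28t)`, `(1/203)(−168t)` and `(1/203)(t + 377)` are all non-negative
integers. -/
theorem no_order203_unit_Ru :
    ¬ ∃ a b c : ℤ, a + b + c = 1 ∧
      (∃ n : ℕ, ((28 * (b + c) : ℤ) : ℚ) / 203 = n) ∧
      (∃ n : ℕ, ((-168 * (b + c) : ℤ) : ℚ) / 203 = n) ∧
      (∃ n : ℕ, (((b + c) + 377 : ℤ) : ℚ) / 203 = n) := by
  rintro ⟨-, b, c, -, ⟨n, h28⟩, ⟨m, h168⟩, ⟨k, h377⟩⟩
  have e28 : 28 * (b + c) = 203 * n :=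
    Int.eq_mul_of_cast_div_eq_natCast (d := 203) (by norm_num) (by exact_mod_cast h28)
  have e168 : -168 * (b + c) = 203 * m :=
    Int.eq_mul_of_cast_div_eq_natCast (d := 203) (by norm_num) (by exact_mod_cast h168)
  have e377 : b + c + 377 = 203 * k :=
    Int.eq_mul_of_cast_div_eq_natCast (d := 203) (by norm_num) (by exact_mod_cast h377)
  -- `28 t` and `-168 t` are both non-negative, so `t = 0`; but `203 ∤ 377`.
  have ht : b + c = 0 := by omega
  omega
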